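/- arXiv:1702.04621 — 2 statements merged into one kernel-verified Lean document; each statement's English description precedes it below -/
import Mathlib

section
/- For the family of implicit methods pairing with the Shu–Osher SSPRK(3,3) method, defined by Ã = [[0,0,0],[4γ+2β, 1−4γ−2β, 0],[1/2−β−γ, γ, β]] and b̃ = (1/6, 1/6, 2/3) with γ = (2β² − (3/2)β + 1/3)/(2 − 4β) for β ≠ 1/2, the method satisfies the third-order conditions b̃ᵀẽ = 1, b̃ᵀc̃ = 1/2, b̃ᵀc̃² = 1/3, and b̃ᵀÃc̃ = 1/6, where c̃ = Ãẽ. -/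
/-!
The row sums of `Ã` are `c̃ = (0, 1, 1/2)`, so the first three conditions say that Simpson's
weights `(1/6, 1/6, 2/3)` at the nodes `0, 1, 1/2` integrate `1`, `t`, `t²` exactly over `[0, 1]`. For the last one, `Ãc̃ = (0, 1 - 4γ - 2β, γ + β/2)`, and in
`b̃ᵀÃc̃ = (1 - 4γ - 2β)/6 + (2/3)(γ + β/2)` both parameters cancel.
-/

open Matrix

noncomputable def implicitPairMatrix (β γ : ℝ) : Matrix (Fin 3) (Fin 3) ℝ :=
  !![0, 0, 0; 4*γ + 2*β, 1 - 4*γ - 2*β, 0; 1/2 - β - γ, γ, β]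

theorem implicitPairMatrix_mulVec_one (β γ : ℝ) :
    implicitPairMatrix β γ *ᵥ (fun _ => 1) = ![0, 1, 1/2] := by
  ext i
  fin_cases i <;> simp [implicitPairMatrix, mulVec, dotProduct, Fin.sum_univ_three]

theorem implicitPairMatrix_mulVec_abscissae (β γ : ℝ) :
    implicitPairMatrix β γ *ᵥ ![0, 1, 1/2] = ![0, 1 - 4*γ - 2*β, γ + β/2] := by
  ext i
  fin_cases i <;> simp [implicitPairMatrix, mulVec, dotProduct, Fin.sum_univ_three]; ring

theorem simpsonWeights_dotProduct (v : Fin 3 → ℝ) :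
    ![1/6, 1/6, 2/3] ⬝ᵥ v = (v 0 + v 1 + 4 * v 2) / 6 := by
  simp only [vec3_dotProduct, cons_val]
  ring

theorem implicit_pair_family_third_order_general
    (β γ : ℝ) :
    let At : Matrix (Fin 3) (Fin 3) ℝ :=
      !![0, 0, 0; 4*γ + 2*β, 1 - 4*γ - 2*β, 0; 1/2 - β - γ, γ, β]
    let bt : Fin 3 → ℝ := ![1/6, 1/6, 2/3]
    let e : Fin 3 → ℝ := fun _ => 1
    let ct : Fin 3 → ℝ := At *ᵥ e
    bt ⬝ᵥ e = 1 ∧ bt ⬝ᵥ ct = 1/2 ∧ bt ⬝ᵥ (ct * ct) = 1/3 ∧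
      bt ⬝ᵥ (At *ᵥ ct) = 1/6 := by
  intro At bt e ct
  have hc : ct = ![0, 1, 1/2] := implicitPairMatrix_mulVec_one β γ
  have hAc : At *ᵥ ct = ![0, 1 - 4*γ - 2*β, γ + β/2] := by
    rw [hc]
    exact implicitPairMatrix_mulVec_abscissae β γ
  rw [hAc, hc]
  simp only [bt, e, simpsonWeights_dotProduct, Pi.mul_apply, cons_val]
  refine ⟨by norm_num, by norm_num, by norm_num, by ring⟩

/-- The one-parameter family of implicit pairs for SSPRK(3,3)
satisfies the four third-order conditions, for any `β ≠ 1/2` with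
`γ = (2β² − (3/2)β + 1/3)/(2 − 4β)`. -/
theorem implicit_pair_family_third_order
    (β γ : ℝ) (hβ : β ≠ 1/2)
    (hγ : γ = (2 * β ^ 2 - (3/2) * β + 1/3) / (2 - 4 * β)) :
    let At : Matrix (Fin 3) (Fin 3) ℝ :=
      !![0, 0, 0; 4*γ + 2*β, 1 - 4*γ - 2*β, 0; 1/2 - β - γ, γ, β]
    let bt : Fin 3 → ℝ := ![1/6, 1/6, 2/3]
    let e : Fin 3 → ℝ := fun _ => 1
    let ct : Fin 3 → ℝ := At *ᵥ e
    bt ⬝ᵥ e = 1 ∧ bt ⬝ᵥ ct = 1/2 ∧ bt ⬝ᵥ (ct * ct) = 1/3 ∧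
      bt ⬝ᵥ (At *ᵥ ct) = 1/6 :=
  implicit_pair_family_third_order_general β γ
end

section
/- In the IMEX SSP framework, if F satisfies the forward Euler condition with step Δt_FE and G satisfies it with step K·Δt_FE, and an additive method has convex-combination decomposition Y = R(e uⁿ) + P(Y + (Δt/r)F(Y)) + Q(Y + (Δt/r̃)G(Y)) with Re, P, Q componentwise nonnegative and row sums of [Re | P | Q] equal to 1, then (for a strictly lower triangular P and Q so stages are computable explicitly by induction) every stage satisfies ‖Yᵢ‖ ≤ ‖uⁿ‖ whenever Δt ≤ min(r·Δt_FE, r̃·K·Δt_FE). -/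
/-!
Convexity and positive homogeneity make `N` subadditive, so `N` of a nonnegative combination is
at most the same combination of the values of `N`. Each stage is a convex combination of `uⁿ` and
forward Euler steps (with steps `Δt / r ≤ Δt_FE`, `Δt / r̃ ≤ K Δt_FE`) taken from earlier stages;
by strong induction those stages are bounded by `N uⁿ`, hence so are the Euler steps and the stage.
-/

open Matrix Finset

section PosHomogeneous

variable {V : Type*} [AddCommGroup V] [Module ℝ V] {N : V → ℝ}

theorem map_zero_of_posHomogeneous (hhom : ∀ (θ : ℝ) (x : V), 0 ≤ θ → N (θ • x) = θ * N x) :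
    N 0 = 0 := by
  simpa using hhom 0 0

theorem map_add_le_of_convex_of_posHomogeneous
    (hconv : ∀ (θ : ℝ) (x y : V), 0 ≤ θ → θ ≤ 1 →
      N (θ • x + (1 - θ) • y) ≤ θ * N x + (1 - θ) * N y)
    (hhom : ∀ (θ : ℝ) (x : V), 0 ≤ θ → N (θ • x) = θ * N x) (x y : V) :
    N (x + y) ≤ N x + N y := by
  have hmid : x + y = (2 : ℝ) • ((1 / 2 : ℝ) • x + (1 - 1 / 2 : ℝ) • y) := by
    norm_num [smul_add, smul_smul]
  calc N (x + y) = 2 * N ((1 / 2 : ℝ) • x + (1 - 1 / 2 : ℝ) • y) := by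
        rw [hmid, hhom 2 _ zero_le_two]
    _ ≤ 2 * (1 / 2 * N x + (1 - 1 / 2) * N y) := by
        gcongr; exact hconv _ x y (by norm_num) (by norm_num)
    _ = N x + N y := by ring

theorem map_sum_smul_le_sum_mul (hhom : ∀ (θ : ℝ) (x : V), 0 ≤ θ → N (θ • x) = θ * N x)
    (hadd : ∀ x y : V, N (x + y) ≤ N x + N y)
    {ι : Type*} (s : Finset ι) (a : ι → ℝ) (v : ι → V) (M : ℝ)
    (ha : ∀ j ∈ s, 0 ≤ a j) (hv : ∀ j ∈ s, a j ≠ 0 → N (v j) ≤ M) :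
    N (∑ j ∈ s, a j • v j) ≤ (∑ j ∈ s, a j) * M := by
  refine (le_sum_of_subadditive N (map_zero_of_posHomogeneous hhom).le hadd s _).trans ?_
  rw [sum_mul]
  refine sum_le_sum fun j hj => ?_
  rw [hhom _ _ (ha j hj)]
  rcases eq_or_ne (a j) 0 with h | h
  · simp [h]
  · exact mul_le_mul_of_nonneg_left (hv j hj h) (ha j hj)

theorem map_convex_combination_le (hhom : ∀ (θ : ℝ) (x : V), 0 ≤ θ → N (θ • x) = θ * N x)
    (hadd : ∀ x y : V, N (x + y) ≤ N x + N y)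
    {ι : Type*} [Fintype ι] (u : V) (c : ℝ) (p q : ι → ℝ) (w z : ι → V)
    (hc : 0 ≤ c) (hp : ∀ j, 0 ≤ p j) (hq : ∀ j, 0 ≤ q j)
    (hsum : c + ∑ j, (p j + q j) = 1)
    (hw : ∀ j, p j ≠ 0 → N (w j) ≤ N u) (hz : ∀ j, q j ≠ 0 → N (z j) ≤ N u) :
    N (c • u + ∑ j, p j • w j + ∑ j, q j • z j) ≤ N u := by
  have hP := map_sum_smul_le_sum_mul hhom hadd univ p w (N u) (fun j _ => hp j) (fun j _ => hw j)
  have hQ := map_sum_smul_le_sum_mul hhom hadd univ q z (N u) (fun j _ => hq j) (fun j _ => hz j)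
  have hsplit := hadd (c • u + ∑ j, p j • w j) (∑ j, q j • z j)
  have hsplit' := hadd (c • u) (∑ j, p j • w j)
  calc N (c • u + ∑ j, p j • w j + ∑ j, q j • z j)
      ≤ c * N u + (∑ j, p j) * N u + (∑ j, q j) * N u := by
        rw [hhom c u hc] at hsplit'; linarith
    _ = (c + ∑ j, (p j + q j)) * N u := by rw [sum_add_distrib]; ring
    _ = N u := by rw [hsum, one_mul]

end PosHomogeneous

theorem imex_ssp_stage_bound_general
    (V : Type*) [AddCommGroup V] [Module ℝ V] (N : V → ℝ)
    (hconv : ∀ (θ : ℝ) (x y : V), 0 ≤ θ → θ ≤ 1 →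
      N (θ • x + (1 - θ) • y) ≤ θ * N x + (1 - θ) * N y)
    (hhom : ∀ (θ : ℝ) (x : V), 0 ≤ θ → N (θ • x) = θ * N x)
    (F G : V → V) (Δt_FE K : ℝ)
    (hFE : ∀ (u : V) (τ : ℝ), 0 ≤ τ → τ ≤ Δt_FE → N (u + τ • F u) ≤ N u)
    (hGE : ∀ (u : V) (τ : ℝ), 0 ≤ τ → τ ≤ K * Δt_FE → N (u + τ • G u) ≤ N u)
    (s : ℕ) (R P Q : Matrix (Fin (s+1)) (Fin (s+1)) ℝ)
    (hRe : ∀ i, 0 ≤ (R *ᵥ (fun _ => (1:ℝ))) i)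
    (hP : ∀ i j, 0 ≤ P i j) (hQ : ∀ i j, 0 ≤ Q i j)
    (hPlow : ∀ i j : Fin (s+1), i ≤ j → P i j = 0)
    (hQlow : ∀ i j : Fin (s+1), i ≤ j → Q i j = 0)
    (hrow : ∀ i, (R *ᵥ (fun _ => (1:ℝ))) i + ∑ j, (P i j + Q i j) = 1)
    (r rt Δt : ℝ) (hr : 0 < r) (hrt : 0 < rt) (hΔt0 : 0 ≤ Δt)
    (hΔtF : Δt / r ≤ Δt_FE) (hΔtG : Δt / rt ≤ K * Δt_FE)
    (un : V) (Y : Fin (s+1) → V)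
    (hstage : ∀ i, Y i = (R *ᵥ (fun _ => (1:ℝ))) i • un
      + ∑ j, P i j • (Y j + (Δt / r) • F (Y j))
      + ∑ j, Q i j • (Y j + (Δt / rt) • G (Y j))) :
    ∀ i, N (Y i) ≤ N un := by
  have hadd := map_add_le_of_convex_of_posHomogeneous hconv hhom
  intro i
  induction i using WellFoundedLT.induction with
  | _ i ih =>
    rw [hstage i]
    refine map_convex_combination_le hhom hadd un _ _ _ _ _ (hRe i) (hP i) (hQ i) (hrow i)
      (fun j hj => ?_) (fun j hj => ?_)
    · have hji : j < i := not_le.mp (mt (hPlow i j) hj)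
      exact (hFE _ _ (div_nonneg hΔt0 hr.le) hΔtF).trans (ih j hji)
    · have hji : j < i := not_le.mp (mt (hQlow i j) hj)
      exact (hGE _ _ (div_nonneg hΔt0 hrt.le) hΔtG).trans (ih j hji)

/-- IMEX SSP stage bound. If `F` satisfies the forward Euler
condition with step `Δt_FE`, `G` with step `K·Δt_FE`, and the additive method
has a convex-combination decomposition with componentwise nonnegative `Re`,
`P`, `Q` whose rows sum to one, with `P`, `Q` strictly lower triangular, then
every stage satisfies `N (Y i) ≤ N uⁿ` whenever
`Δt ≤ min (r·Δt_FE) (r̃·K·Δt_FE)`. -/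
theorem imex_ssp_stage_bound
    (V : Type*) [AddCommGroup V] [Module ℝ V] (N : V → ℝ)
    (hconv : ∀ (θ : ℝ) (x y : V), 0 ≤ θ → θ ≤ 1 →
      N (θ • x + (1 - θ) • y) ≤ θ * N x + (1 - θ) * N y)
    (hhom : ∀ (θ : ℝ) (x : V), 0 ≤ θ → N (θ • x) = θ * N x)
    (F G : V → V) (Δt_FE K : ℝ) (hFEpos : 0 < Δt_FE) (hK : 0 < K)
    (hFE : ∀ (u : V) (τ : ℝ), 0 ≤ τ → τ ≤ Δt_FE → N (u + τ • F u) ≤ N u)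
    (hGE : ∀ (u : V) (τ : ℝ), 0 ≤ τ → τ ≤ K * Δt_FE → N (u + τ • G u) ≤ N u)
    (s : ℕ) (R P Q : Matrix (Fin (s+1)) (Fin (s+1)) ℝ)
    (hRe : ∀ i, 0 ≤ (R *ᵥ (fun _ => (1:ℝ))) i)
    (hP : ∀ i j, 0 ≤ P i j) (hQ : ∀ i j, 0 ≤ Q i j)
    (hPlow : ∀ i j : Fin (s+1), i ≤ j → P i j = 0)
    (hQlow : ∀ i j : Fin (s+1), i ≤ j → Q i j = 0)
    (hrow : ∀ i, (R *ᵥ (fun _ => (1:ℝ))) i + ∑ j, (P i j + Q i j) = 1)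
    (r rt Δt : ℝ) (hr : 0 < r) (hrt : 0 < rt) (hΔt0 : 0 ≤ Δt)
    (hΔtF : Δt / r ≤ Δt_FE) (hΔtG : Δt / rt ≤ K * Δt_FE)
    (un : V) (Y : Fin (s+1) → V)
    (hstage : ∀ i, Y i = (R *ᵥ (fun _ => (1:ℝ))) i • un
      + ∑ j, P i j • (Y j + (Δt / r) • F (Y j))
      + ∑ j, Q i j • (Y j + (Δt / rt) • G (Y j))) :
    ∀ i, N (Y i) ≤ N un :=
  imex_ssp_stage_bound_general V N hconv hhom F G Δt_FE K hFE hGE s R P Q hRe hP hQ hPlow hQlow hrow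
    r rt Δt hr hrt hΔt0 hΔtF hΔtG un Y hstage
end
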